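/- arXiv:1802.04436 — 5 statements merged into one kernel-verified Lean document; each statement's English description precedes it below -/
import Mathlib

section
/- The differential entropy rate of the continuous-time Ruelle–Bowen generator Q^RB with invariant measure π^RB equals λ_A: with h_1(Q) = −Σ_i π_i q_{ii} − Σ_{i≠j} π_i q_{ij} log q_{ij}, one has h_1(Q^RB) = λ_A. -/
open Matrix BigOperators Finset

/-- A nonnegative matrix is irreducible iff for every pair of indices some power
has a strictly positive entry (the associated directed graph is strongly connected). -/
def IsIrreducibleMat {n : ℕ} (A : Matrix (Fin n) (Fin n) ℝ) : Prop :=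
  ∀ i j, ∃ k : ℕ, 0 < (A ^ k) i j

/-- the differential entropy rate
h₁(Q) = −Σ_i π_i q_ii − Σ_{i≠j} π_i q_ij log q_ij of the continuous-time RB
generator Q^RB (with q_ij = a_ij φ_j/φ_i off-diagonal, q_ii = −λ_A), evaluated at
its invariant measure π^RB_i = φ_i φ̂_i, equals λ_A. -/
theorem stmt9 {n : ℕ} (A : Matrix (Fin n) (Fin n) ℝ)
    (hA01 : ∀ i j, A i j = 0 ∨ A i j = 1) (hAdiag : ∀ i, A i i = 0)
    (hirr : IsIrreducibleMat A)
    (lamA : ℝ) (hlam : 0 < lamA)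
    (φ φhat : Fin n → ℝ) (hφ : ∀ i, 0 < φ i) (hφhat : ∀ i, 0 < φhat i)
    (heig : A.mulVec φ = lamA • φ)
    (heigL : A.transpose.mulVec φhat = lamA • φhat)
    (hnorm : ∑ i, φ i * φhat i = 1)
    (Q : Matrix (Fin n) (Fin n) ℝ)
    (hQ : Q = (Matrix.diagonal fun i => (φ i)⁻¹) * A * Matrix.diagonal φ
              - lamA • (1 : Matrix (Fin n) (Fin n) ℝ)) :
    (-∑ i, (φ i * φhat i) * Q i i)
      - ∑ i, ∑ j, (if i ≠ j then (φ i * φhat i) * Q i j * Real.log (Q i j) else 0)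
      = lamA := by
  have hQij : ∀ i j, Q i j = (φ i)⁻¹ * A i j * φ j - lamA * (if i = j then 1 else 0) := by
    intro i j
    rw [hQ]
    simp [Matrix.sub_apply, Matrix.mul_diagonal, Matrix.diagonal_mul, Matrix.one_apply,
      mul_assoc, mul_comm]
    ring
  have hdiag : ∀ i, Q i i = -lamA := by
    intro i; rw [hQij]; simp [hAdiag i]
  have h1 : (-∑ i, (φ i * φhat i) * Q i i) = lamA := by
    simp only [hdiag, mul_neg, Finset.sum_neg_distrib, neg_neg]
    rw [← Finset.sum_mul, hnorm, one_mul]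
  have hL : ∀ j, ∑ i, A i j * φhat i = lamA * φhat j := by
    intro j
    have := congrFun heigL j
    simpa [Matrix.mulVec, dotProduct, Matrix.transpose_apply] using this
  have hR : ∀ i, ∑ j, A i j * φ j = lamA * φ i := by
    intro i
    have := congrFun heig i
    simpa [Matrix.mulVec, dotProduct] using this
  have hterm : ∀ i j, (if i ≠ j then (φ i * φhat i) * Q i j * Real.log (Q i j) else 0)
      = A i j * (φhat i * φ j * (Real.log (φ j) - Real.log (φ i))) := by
    intro i j
    by_cases hij : i = j
    · subst hij; simp [hAdiag]
    · rw [if_pos hij]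
      rcases hA01 i j with h0 | h1v
      · simp [hQij i j, h0, hij]
      · have hQv : Q i j = (φ i)⁻¹ * φ j := by rw [hQij]; simp [h1v, hij]
        rw [hQv, h1v, Real.log_mul (inv_ne_zero (hφ i).ne') (hφ j).ne', Real.log_inv]
        field_simp [(hφ i).ne']
        ring
  have T1 : ∑ i, ∑ j, A i j * φhat i * φ j * Real.log (φ j)
      = lamA * ∑ j, φhat j * φ j * Real.log (φ j) := by
    rw [Finset.sum_comm, Finset.mul_sum]
    refine Finset.sum_congr rfl fun j _ => ?_
    have h : ∑ i, A i j * φhat i * φ j * Real.log (φ j)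
        = (∑ i, A i j * φhat i) * (φ j * Real.log (φ j)) := by
      rw [Finset.sum_mul]; exact Finset.sum_congr rfl fun i _ => by ring
    rw [h, hL j]; ring
  have T2 : ∑ i, ∑ j, A i j * φhat i * φ j * Real.log (φ i)
      = lamA * ∑ i, φhat i * φ i * Real.log (φ i) := by
    rw [Finset.mul_sum]
    refine Finset.sum_congr rfl fun i _ => ?_
    have h : ∑ j, A i j * φhat i * φ j * Real.log (φ i)
        = (∑ j, A i j * φ j) * (φhat i * Real.log (φ i)) := by
      rw [Finset.sum_mul]; exact Finset.sum_congr rfl fun j _ => by ring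
    rw [h, hR i]; ring
  have hS : ∑ i, ∑ j, (if i ≠ j then (φ i * φhat i) * Q i j * Real.log (Q i j) else 0) = 0 := by
    simp only [hterm]
    have h : ∀ i j, A i j * (φhat i * φ j * (Real.log (φ j) - Real.log (φ i)))
        = A i j * φhat i * φ j * Real.log (φ j) - A i j * φhat i * φ j * Real.log (φ i) :=
      fun i j => by ring
    simp only [h, Finset.sum_sub_distrib, T1, T2, sub_self]
  rw [hS, sub_zero]
  exact h1
end

section
/- Among all infinitesimal generators Q compatible with the graph (q_{ij} > 0 only if a_{ij} = 1 for i ≠ j, rows summing to zero, nonnegative off-diagonal entries) with invariant probability distribution π (Qᵀπ = 0), the differential entropy rate h_1(Q) = −Σ_i π_i q_{ii} − Σ_{i≠j} π_i q_{ij} log q_{ij} satisfies h_1(Q) ≤ λ_A, with equality attained by Q^RB. -/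
open Matrix BigOperators Finset

private lemma key_ineq (q p : ℝ) (hq : 0 ≤ q) (hp : 0 ≤ p) (h : q ≠ 0 → 0 < p) :
    q * Real.log p + (q - p) ≤ q * Real.log q := by
  rcases eq_or_lt_of_le hq with h0 | hq'
  · rw [← h0]; simpa using hp
  · have hp' : 0 < p := h hq'.ne'
    have hlog : Real.log (p / q) ≤ p / q - 1 :=
      Real.log_le_sub_one_of_pos (div_pos hp' hq')
    rw [Real.log_div hp'.ne' hq'.ne'] at hlog
    have h2 := mul_le_mul_of_nonneg_left hlog hq'.le
    have hpq : q * (p / q) = p := by field_simp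
    nlinarith

private lemma sum_ite_ne_eq {n : ℕ} (f : Fin n → Fin n → ℝ) (hdiag : ∀ i, f i i = 0) :
    ∑ i, ∑ j, (if i ≠ j then f i j else 0) = ∑ i, ∑ j, f i j := by
  refine Finset.sum_congr rfl fun i _ => Finset.sum_congr rfl fun j _ => ?_
  by_cases h : i = j
  · subst h; simp [hdiag]
  · simp [h]

/-- over all generators Q compatible with the graph of A, with
invariant probability distribution π, the differential entropy rate h₁ is at
most λ_A, with equality attained at Q^RB with π^RB. -/
theorem stmt10 {n : ℕ} (A : Matrix (Fin n) (Fin n) ℝ)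
    (hA01 : ∀ i j, A i j = 0 ∨ A i j = 1) (hAdiag : ∀ i, A i i = 0)
    (hirr : IsIrreducibleMat A)
    (lamA : ℝ) (hlam : 0 < lamA)
    (φ φhat : Fin n → ℝ) (hφ : ∀ i, 0 < φ i) (hφhat : ∀ i, 0 < φhat i)
    (heig : A.mulVec φ = lamA • φ)
    (heigL : A.transpose.mulVec φhat = lamA • φhat)
    (hnorm : ∑ i, φ i * φhat i = 1) :
    (∀ (Q : Matrix (Fin n) (Fin n) ℝ) (π : Fin n → ℝ),
        (∀ i j, i ≠ j → 0 ≤ Q i j) →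
        (∀ i j, i ≠ j → Q i j ≠ 0 → A i j = 1) →
        (Q.mulVec (fun _ => (1 : ℝ)) = 0) →
        (∀ i, 0 ≤ π i) → (∑ i, π i = 1) →
        (Q.transpose.mulVec π = 0) →
        (-∑ i, π i * Q i i)
          - ∑ i, ∑ j, (if i ≠ j then π i * Q i j * Real.log (Q i j) else 0)
          ≤ lamA) ∧
    (∀ (Q : Matrix (Fin n) (Fin n) ℝ),
        Q = (Matrix.diagonal fun i => (φ i)⁻¹) * A * Matrix.diagonal φ
              - lamA • (1 : Matrix (Fin n) (Fin n) ℝ) →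
        (-∑ i, (φ i * φhat i) * Q i i)
          - ∑ i, ∑ j, (if i ≠ j then (φ i * φhat i) * Q i j * Real.log (Q i j) else 0)
          = lamA) := by
  have hAnn : ∀ i j, 0 ≤ A i j := by
    intro i j; rcases hA01 i j with h | h <;> rw [h] <;> norm_num
  have hAφ : ∀ i, ∑ j, A i j * φ j = lamA * φ i := by
    intro i
    have := congrFun heig i
    simpa [Matrix.mulVec, dotProduct] using this
  have hAφhat : ∀ j, ∑ i, A i j * φhat i = lamA * φhat j := by
    intro j
    have := congrFun heigL j
    simpa [Matrix.mulVec, dotProduct, Matrix.transpose_apply] using this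
  constructor
  · -- inequality part
    intro Q π hQnn hQsupp hrow hπ hπsum hinvar
    have hrowsum : ∀ i, ∑ j, Q i j = 0 := by
      intro i
      have := congrFun hrow i
      simpa [Matrix.mulVec, dotProduct] using this
    have hcolsum : ∀ j, ∑ i, Q i j * π i = 0 := by
      intro j
      have := congrFun hinvar j
      simpa [Matrix.mulVec, dotProduct, Matrix.transpose_apply] using this
    set S := ∑ i, ∑ j, (if i ≠ j then π i * Q i j * Real.log (Q i j) else 0) with hS
    -- pointwise inequality
    have hpoint : ∀ i j, (if i ≠ j then
          π i * Q i j * (Real.log (φ j) - Real.log (φ i)) + π i * Q i j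
            - π i * (A i j * φ j / φ i) else 0)
        ≤ (if i ≠ j then π i * Q i j * Real.log (Q i j) else 0) := by
      intro i j
      by_cases hij : i ≠ j
      · rw [if_pos hij, if_pos hij]
        by_cases hq : Q i j = 0
        · simp only [hq, mul_zero, zero_mul, zero_add, mul_zero]
          have : 0 ≤ π i * (A i j * φ j / φ i) :=
            mul_nonneg (hπ i) (div_nonneg (mul_nonneg (hAnn i j) (hφ j).le) (hφ i).le)
          linarith
        · have hA1 : A i j = 1 := hQsupp i j hij hq
          have hqpos : 0 < Q i j := lt_of_le_of_ne (hQnn i j hij) (Ne.symm hq)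
          have hppos : 0 < φ j / φ i := div_pos (hφ j) (hφ i)
          have hkey := key_ineq (Q i j) (φ j / φ i) hqpos.le hppos.le (fun _ => hppos)
          rw [Real.log_div (hφ j).ne' (hφ i).ne'] at hkey
          have h2 := mul_le_mul_of_nonneg_left hkey (hπ i)
          rw [hA1]
          calc π i * Q i j * (Real.log (φ j) - Real.log (φ i)) + π i * Q i j
                - π i * (1 * φ j / φ i)
              = π i * (Q i j * (Real.log (φ j) - Real.log (φ i))
                  + (Q i j - φ j / φ i)) := by ring
            _ ≤ π i * (Q i j * Real.log (Q i j)) := h2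
            _ = π i * Q i j * Real.log (Q i j) := by ring
      · simp [hij]
    have hmain : (∑ i, ∑ j, (if i ≠ j then
          π i * Q i j * (Real.log (φ j) - Real.log (φ i)) + π i * Q i j
            - π i * (A i j * φ j / φ i) else 0)) ≤ S :=
      Finset.sum_le_sum fun i _ => Finset.sum_le_sum fun j _ => hpoint i j
    -- split the left-hand sum into three parts
    have hsplit : (∑ i, ∑ j, (if i ≠ j then
          π i * Q i j * (Real.log (φ j) - Real.log (φ i)) + π i * Q i j
            - π i * (A i j * φ j / φ i) else 0))
        = (∑ i, ∑ j, (if i ≠ j then π i * Q i j * (Real.log (φ j) - Real.log (φ i)) else 0))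
          + (∑ i, ∑ j, (if i ≠ j then π i * Q i j else 0))
          - (∑ i, ∑ j, (if i ≠ j then π i * (A i j * φ j / φ i) else 0)) := by
      rw [← Finset.sum_add_distrib, ← Finset.sum_sub_distrib]
      refine Finset.sum_congr rfl fun i _ => ?_
      rw [← Finset.sum_add_distrib, ← Finset.sum_sub_distrib]
      refine Finset.sum_congr rfl fun j _ => ?_
      by_cases h : i ≠ j <;> simp [h]
    -- T1 = 0
    have hT1 : (∑ i, ∑ j, (if i ≠ j then
          π i * Q i j * (Real.log (φ j) - Real.log (φ i)) else 0)) = 0 := by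
      rw [sum_ite_ne_eq _ (fun i => by simp)]
      have : ∀ i, ∑ j, π i * Q i j * (Real.log (φ j) - Real.log (φ i))
          = (∑ j, π i * Q i j * Real.log (φ j)) - (∑ j, π i * Q i j * Real.log (φ i)) := by
        intro i
        rw [← Finset.sum_sub_distrib]
        exact Finset.sum_congr rfl fun j _ => by ring
      rw [Finset.sum_congr rfl fun i _ => this i, Finset.sum_sub_distrib]
      have hfirst : (∑ i, ∑ j, π i * Q i j * Real.log (φ j)) = 0 := by
        rw [Finset.sum_comm]
        refine Finset.sum_eq_zero fun j _ => ?_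
        have : ∑ i, π i * Q i j * Real.log (φ j)
            = (∑ i, Q i j * π i) * Real.log (φ j) := by
          rw [Finset.sum_mul]; exact Finset.sum_congr rfl fun i _ => by ring
        rw [this, hcolsum j, zero_mul]
      have hsecond : (∑ i, ∑ j, π i * Q i j * Real.log (φ i)) = 0 := by
        refine Finset.sum_eq_zero fun i _ => ?_
        have : ∑ j, π i * Q i j * Real.log (φ i)
            = (π i * Real.log (φ i)) * ∑ j, Q i j := by
          rw [Finset.mul_sum]; exact Finset.sum_congr rfl fun j _ => by ring
        rw [this, hrowsum i, mul_zero]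
      rw [hfirst, hsecond, sub_zero]
    -- T2
    have hT2 : (∑ i, ∑ j, (if i ≠ j then π i * Q i j else 0)) = -∑ i, π i * Q i i := by
      rw [← Finset.sum_neg_distrib]
      refine Finset.sum_congr rfl fun i _ => ?_
      have hstep : ∀ j, (if i ≠ j then π i * Q i j else 0)
          = π i * Q i j - (if i = j then π i * Q i j else 0) := by
        intro j; by_cases h : i = j <;> simp [h]
      rw [Finset.sum_congr rfl fun j _ => hstep j, Finset.sum_sub_distrib,
        Finset.sum_ite_eq]
      simp [← Finset.mul_sum, hrowsum i]
    -- T3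
    have hT3 : (∑ i, ∑ j, (if i ≠ j then π i * (A i j * φ j / φ i) else 0)) = lamA := by
      rw [sum_ite_ne_eq _ (fun i => by simp [hAdiag i])]
      have : ∀ i, ∑ j, π i * (A i j * φ j / φ i) = lamA * π i := by
        intro i
        have : ∑ j, π i * (A i j * φ j / φ i)
            = (π i / φ i) * ∑ j, A i j * φ j := by
          rw [Finset.mul_sum]; exact Finset.sum_congr rfl fun j _ => by ring
        have hne : φ i ≠ 0 := (hφ i).ne'
        rw [this, hAφ i]
        field_simp
      rw [Finset.sum_congr rfl fun i _ => this i, ← Finset.mul_sum, hπsum, mul_one]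
    rw [hsplit, hT1, hT2] at hmain
    rw [hT3] at hmain
    linarith
  · -- equality part
    intro Q hQ
    have hQentry : ∀ i j, Q i j
        = (φ i)⁻¹ * A i j * φ j - (if i = j then lamA else 0) := by
      intro i j
      rw [hQ]
      rw [Matrix.sub_apply, Matrix.mul_diagonal, Matrix.diagonal_mul,
        Matrix.smul_apply, Matrix.one_apply, smul_eq_mul]
      by_cases h : i = j <;> simp [h] <;> ring
    have hQdiag : ∀ i, Q i i = -lamA := by
      intro i
      rw [hQentry i i, hAdiag i]
      simp
    have hfirstsum : (-∑ i, (φ i * φhat i) * Q i i) = lamA := by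
      have : ∀ i, (φ i * φhat i) * Q i i = -(lamA * (φ i * φhat i)) := by
        intro i; rw [hQdiag i]; ring
      rw [Finset.sum_congr rfl fun i _ => this i, Finset.sum_neg_distrib,
        ← Finset.mul_sum, hnorm, mul_one, neg_neg]
    have hoffsum : (∑ i, ∑ j, (if i ≠ j then
        (φ i * φhat i) * Q i j * Real.log (Q i j) else 0))
        = ∑ i, ∑ j, φhat i * (A i j * φ j) * (Real.log (φ j) - Real.log (φ i)) := by
      refine Finset.sum_congr rfl fun i _ => Finset.sum_congr rfl fun j _ => ?_
      by_cases hij : i = j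
      · subst hij; simp [hAdiag i]
      · have hij' : i ≠ j := hij
        simp only [hij', if_true, ne_eq, not_false_eq_true]
        have hQij : Q i j = (φ i)⁻¹ * A i j * φ j := by
          rw [hQentry i j]; simp [hij]
        rcases hA01 i j with h0 | h1
        · rw [hQij, h0]; simp
        · have : Q i j = φ j / φ i := by rw [hQij, h1]; field_simp
          have hne : φ i ≠ 0 := (hφ i).ne'
          rw [this, h1, Real.log_div (hφ j).ne' (hφ i).ne']
          field_simp
    have hzero : (∑ i, ∑ j, φhat i * (A i j * φ j) * (Real.log (φ j) - Real.log (φ i))) = 0 := by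
      have hsplit2 : (∑ i, ∑ j, φhat i * (A i j * φ j) * (Real.log (φ j) - Real.log (φ i)))
          = (∑ i, ∑ j, φhat i * (A i j * φ j) * Real.log (φ j))
            - (∑ i, ∑ j, φhat i * (A i j * φ j) * Real.log (φ i)) := by
        rw [← Finset.sum_sub_distrib]
        refine Finset.sum_congr rfl fun i _ => ?_
        rw [← Finset.sum_sub_distrib]
        exact Finset.sum_congr rfl fun j _ => by ring
      have hfirst : (∑ i, ∑ j, φhat i * (A i j * φ j) * Real.log (φ j))
          = lamA * ∑ j, φhat j * φ j * Real.log (φ j) := by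
        rw [Finset.sum_comm, Finset.mul_sum]
        refine Finset.sum_congr rfl fun j _ => ?_
        have : ∑ i, φhat i * (A i j * φ j) * Real.log (φ j)
            = (∑ i, A i j * φhat i) * (φ j * Real.log (φ j)) := by
          rw [Finset.sum_mul]; exact Finset.sum_congr rfl fun i _ => by ring
        rw [this, hAφhat j]; ring
      have hsecond : (∑ i, ∑ j, φhat i * (A i j * φ j) * Real.log (φ i))
          = lamA * ∑ i, φhat i * φ i * Real.log (φ i) := by
        rw [Finset.mul_sum]
        refine Finset.sum_congr rfl fun i _ => ?_
        have : ∑ j, φhat i * (A i j * φ j) * Real.log (φ i)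
            = (∑ j, A i j * φ j) * (φhat i * Real.log (φ i)) := by
          rw [Finset.sum_mul]; exact Finset.sum_congr rfl fun j _ => by ring
        rw [this, hAφ i]; ring
      rw [hsplit2, hfirst, hsecond]
      have : (∑ j, φhat j * φ j * Real.log (φ j)) = ∑ i, φhat i * φ i * Real.log (φ i) := rfl
      rw [this]; ring
    rw [hfirstsum, hoffsum, hzero, sub_zero]
end

section
/- For any η > 0, the generator Q = e^{η−1} Q^RB achieves differential entropy rate h_η(Q) = −η Σ_i π_i q_{ii} − Σ_{i≠j} π_i q_{ij} log q_{ij} equal to e^{η−1} λ_A, where π = π^RB is its invariant distribution. -/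
open Matrix BigOperators Finset

/-- for η > 0, the scaled generator Q = e^{η−1} Q^RB achieves
differential entropy rate h_η(Q) = e^{η−1} λ_A at its invariant distribution π^RB. -/
theorem stmt13 {n : ℕ} (A : Matrix (Fin n) (Fin n) ℝ)
    (hA01 : ∀ i j, A i j = 0 ∨ A i j = 1) (hAdiag : ∀ i, A i i = 0)
    (hirr : IsIrreducibleMat A)
    (lamA : ℝ) (hlam : 0 < lamA)
    (φ φhat : Fin n → ℝ) (hφ : ∀ i, 0 < φ i) (hφhat : ∀ i, 0 < φhat i)
    (heig : A.mulVec φ = lamA • φ)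
    (heigL : A.transpose.mulVec φhat = lamA • φhat)
    (hnorm : ∑ i, φ i * φhat i = 1)
    (η : ℝ) (hη : 0 < η)
    (Q : Matrix (Fin n) (Fin n) ℝ)
    (hQ : Q = Real.exp (η - 1) •
        ((Matrix.diagonal fun i => (φ i)⁻¹) * A * Matrix.diagonal φ
          - lamA • (1 : Matrix (Fin n) (Fin n) ℝ))) :
    (-η * ∑ i, (φ i * φhat i) * Q i i)
      - ∑ i, ∑ j, (if i ≠ j then (φ i * φhat i) * Q i j * Real.log (Q i j) else 0)
      = Real.exp (η - 1) * lamA := by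
  set c := Real.exp (η - 1) with hc_def
  have hc : 0 < c := Real.exp_pos _
  have hφsum : ∀ i, ∑ j, A i j * φ j = lamA * φ i := by
    intro i
    have := congrFun heig i
    simpa [Matrix.mulVec, dotProduct] using this
  have hφhatsum : ∀ j, ∑ i, A i j * φhat i = lamA * φhat j := by
    intro j
    have := congrFun heigL j
    simpa [Matrix.mulVec, dotProduct, Matrix.transpose_apply] using this
  have hQdiag : ∀ i, Q i i = -(c * lamA) := by
    intro i
    rw [hQ]
    simp [Matrix.sub_apply, Matrix.mul_diagonal, Matrix.diagonal_mul, hAdiag,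
      Matrix.one_apply, smul_eq_mul]
  have hQoff : ∀ i j, i ≠ j → Q i j = c * ((φ i)⁻¹ * A i j * φ j) := by
    intro i j hij
    rw [hQ]
    simp [Matrix.sub_apply, Matrix.mul_diagonal, Matrix.diagonal_mul,
      Matrix.one_apply, hij, smul_eq_mul]
  have hterm : ∀ i j, (if i ≠ j then (φ i * φhat i) * Q i j * Real.log (Q i j) else 0)
      = A i j * (c * (φhat i * φ j) * ((η - 1) + Real.log (φ j) - Real.log (φ i))) := by
    intro i j
    by_cases hij : i = j
    · subst hij; simp [hAdiag]
    · simp only [if_pos hij, Ne, hij, not_false_iff, if_true]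
      rcases hA01 i j with ha | ha
      · rw [hQoff i j hij, ha]; simp
      · rw [hQoff i j hij, ha]
        have hφi := (hφ i).ne'
        have hφj := (hφ j).ne'
        have hlog : Real.log (c * ((φ i)⁻¹ * 1 * φ j))
            = (η - 1) + Real.log (φ j) - Real.log (φ i) := by
          rw [mul_one, Real.log_mul hc.ne' (by positivity),
            Real.log_mul (by positivity) hφj, Real.log_inv, hc_def, Real.log_exp]
          ring
        rw [hlog]
        field_simp
  have hsum1 : ∑ i, (φ i * φhat i) * Q i i = -(c * lamA) := by
    calc ∑ i, (φ i * φhat i) * Q i i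
        = ∑ i, (φ i * φhat i) * (-(c * lamA)) := by
          refine Finset.sum_congr rfl fun i _ => by rw [hQdiag i]
      _ = (∑ i, φ i * φhat i) * (-(c * lamA)) := by rw [Finset.sum_mul]
      _ = -(c * lamA) := by rw [hnorm, one_mul]
  have hsum2 : ∑ i, ∑ j, (if i ≠ j then (φ i * φhat i) * Q i j * Real.log (Q i j) else 0)
      = c * lamA * (η - 1) := by
    have h1 : ∀ i j, A i j * (c * (φhat i * φ j) * ((η - 1) + Real.log (φ j) - Real.log (φ i)))
        = (c * (φhat i * ((η - 1) - Real.log (φ i)))) * (A i j * φ j)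
          + c * (φ j * Real.log (φ j)) * (A i j * φhat i) := by
      intro i j; ring
    calc ∑ i, ∑ j, (if i ≠ j then (φ i * φhat i) * Q i j * Real.log (Q i j) else 0)
        = ∑ i, ∑ j, ((c * (φhat i * ((η - 1) - Real.log (φ i)))) * (A i j * φ j)
            + c * (φ j * Real.log (φ j)) * (A i j * φhat i)) := by
          refine Finset.sum_congr rfl fun i _ => Finset.sum_congr rfl fun j _ => ?_
          rw [hterm i j, h1 i j]
      _ = (∑ i, (c * (φhat i * ((η - 1) - Real.log (φ i)))) * (lamA * φ i))
            + ∑ j, c * (φ j * Real.log (φ j)) * (lamA * φhat j) := by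
          simp_rw [Finset.sum_add_distrib]
          congr 1
          · refine Finset.sum_congr rfl fun i _ => ?_
            rw [← Finset.mul_sum, hφsum]
          · rw [Finset.sum_comm]
            refine Finset.sum_congr rfl fun j _ => ?_
            rw [← Finset.mul_sum, hφhatsum]
      _ = ∑ i, (c * lamA * (η - 1)) * (φ i * φhat i) := by
          rw [← Finset.sum_add_distrib]
          refine Finset.sum_congr rfl fun i _ => by ring
      _ = c * lamA * (η - 1) := by
          rw [← Finset.mul_sum, hnorm, mul_one]
  rw [hsum1, hsum2]
  ring
end

section
/- For any η > 0 and any generator Q compatible with the graph with invariant probability distribution π, h_η(Q) = −η Σ_i π_i q_{ii} − Σ_{i≠j} π_i q_{ij} log q_{ij} ≤ e^{η−1} λ_A. -/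
open Matrix BigOperators Finset

lemma entropy_pt (η x a : ℝ) (hx : 0 ≤ x) (ha : 0 < a) :
    x * (η - Real.log x) ≤ Real.exp (η - 1) * a - x * Real.log a := by
  rcases hx.eq_or_lt with h | hx
  · simp [← h]
    positivity
  · have hu : 0 < Real.exp (η - 1) * a / x := by positivity
    have hlog := Real.log_le_sub_one_of_pos hu
    rw [Real.log_div (by positivity) hx.ne', Real.log_mul (Real.exp_pos _).ne' ha.ne',
      Real.log_exp] at hlog
    have h2 := mul_le_mul_of_nonneg_left hlog hx.le
    have h3 : x * (Real.exp (η - 1) * a / x) = Real.exp (η - 1) * a := by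
      field_simp
    nlinarith [h2, h3]

/-- for any η > 0 and any generator Q compatible with the graph,
with invariant probability distribution π with positive entries,
h_η(Q) ≤ e^{η−1} λ_A. -/
theorem stmt14 {n : ℕ} (A : Matrix (Fin n) (Fin n) ℝ)
    (hA01 : ∀ i j, A i j = 0 ∨ A i j = 1) (hAdiag : ∀ i, A i i = 0)
    (hirr : IsIrreducibleMat A)
    (lamA : ℝ) (hlam : 0 < lamA)
    (φ φhat : Fin n → ℝ) (hφ : ∀ i, 0 < φ i) (hφhat : ∀ i, 0 < φhat i)
    (heig : A.mulVec φ = lamA • φ)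
    (heigL : A.transpose.mulVec φhat = lamA • φhat)
    (hnorm : ∑ i, φ i * φhat i = 1)
    (η : ℝ) (hη : 0 < η)
    (Q : Matrix (Fin n) (Fin n) ℝ) (π : Fin n → ℝ)
    (hQoff : ∀ i j, i ≠ j → 0 ≤ Q i j)
    (hQsupp : ∀ i j, i ≠ j → Q i j ≠ 0 → A i j = 1)
    (hQrow : Q.mulVec (fun _ => (1 : ℝ)) = 0)
    (hπpos : ∀ i, 0 < π i) (hπsum : ∑ i, π i = 1)
    (hinv : Q.transpose.mulVec π = 0) :
    (-η * ∑ i, π i * Q i i)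
      - ∑ i, ∑ j, (if i ≠ j then π i * Q i j * Real.log (Q i j) else 0)
      ≤ Real.exp (η - 1) * lamA := by
  have hrow : ∀ i, ∑ j, Q i j = 0 := by
    intro i
    have h := congrFun hQrow i
    simpa [Matrix.mulVec, dotProduct] using h
  have hcol : ∀ j, ∑ i, π i * Q i j = 0 := by
    intro j
    have h := congrFun hinv j
    simpa [Matrix.mulVec, dotProduct, Matrix.transpose_apply, mul_comm] using h
  have hφeq : ∀ i, ∑ j, A i j * φ j = lamA * φ i := by
    intro i
    have h := congrFun heig i
    simpa [Matrix.mulVec, dotProduct, Pi.smul_apply, smul_eq_mul] using h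
  have hdiag : ∀ i, ∑ j, (if i ≠ j then Q i j else 0) = -(Q i i) := by
    intro i
    have h2 : ∑ j, Q i j
        = ∑ j, ((if i = j then Q i j else 0) + (if i ≠ j then Q i j else 0)) := by
      apply Finset.sum_congr rfl
      intro j _
      by_cases h : i = j <;> simp [h]
    rw [Finset.sum_add_distrib, Finset.sum_ite_eq] at h2
    simp only [Finset.mem_univ, if_true] at h2
    have h3 := hrow i
    linarith
  -- rewrite LHS as a single double sum
  have hLHS : (-η * ∑ i, π i * Q i i)
      - ∑ i, ∑ j, (if i ≠ j then π i * Q i j * Real.log (Q i j) else 0)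
      = ∑ i, ∑ j, (if i ≠ j then π i * Q i j * (η - Real.log (Q i j)) else 0) := by
    have e1 : -η * ∑ i, π i * Q i i
        = ∑ i, ∑ j, (if i ≠ j then π i * Q i j * η else 0) := by
      rw [Finset.mul_sum]
      apply Finset.sum_congr rfl
      intro i _
      have : ∑ j, (if i ≠ j then π i * Q i j * η else 0)
          = (π i * η) * ∑ j, (if i ≠ j then Q i j else 0) := by
        rw [Finset.mul_sum]
        apply Finset.sum_congr rfl
        intro j _
        by_cases h : i = j <;> simp [h] <;> ring
      rw [this, hdiag i]; ring
    rw [e1, ← Finset.sum_sub_distrib]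
    apply Finset.sum_congr rfl
    intro i _
    rw [← Finset.sum_sub_distrib]
    apply Finset.sum_congr rfl
    intro j _
    by_cases h : i = j <;> simp [h] <;> ring
  rw [hLHS]
  -- pointwise bound
  have key : ∀ i j, (if i ≠ j then π i * Q i j * (η - Real.log (Q i j)) else 0)
      ≤ Real.exp (η - 1) * (π i * A i j * (φ j / φ i))
        - π i * Q i j * (Real.log (φ j) - Real.log (φ i)) := by
    intro i j
    by_cases hij : i = j
    · subst hij
      simp [hAdiag i]
    · rw [if_pos hij]
      have hx : 0 ≤ Q i j := hQoff i j hij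
      by_cases hQ0 : Q i j = 0
      · have h0 : 0 ≤ Real.exp (η - 1) * (π i * A i j * (φ j / φ i)) := by
          rcases hA01 i j with h | h
          · simp [h]
          · have hπi := hπpos i
            have hφj := hφ j
            have hφi := hφ i
            rw [h, mul_one]
            positivity
        simpa [hQ0] using h0
      · have hA : A i j = 1 := hQsupp i j hij hQ0
        rw [hA]
        have hφj := hφ j
        have hφi := hφ i
        have ha : 0 < φ j / φ i := by positivity
        have h := entropy_pt η (Q i j) (φ j / φ i) hx ha
        have hπ := (hπpos i).le
        have h2 := mul_le_mul_of_nonneg_left h hπ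
        have hlogd : Real.log (φ j / φ i) = Real.log (φ j) - Real.log (φ i) :=
          Real.log_div (hφ j).ne' (hφ i).ne'
        rw [hlogd] at h2
        nlinarith [h2]
  calc ∑ i, ∑ j, (if i ≠ j then π i * Q i j * (η - Real.log (Q i j)) else 0)
      ≤ ∑ i, ∑ j, (Real.exp (η - 1) * (π i * A i j * (φ j / φ i))
          - π i * Q i j * (Real.log (φ j) - Real.log (φ i))) := by
        apply Finset.sum_le_sum
        intro i _
        exact Finset.sum_le_sum fun j _ => key i j
    _ = Real.exp (η - 1) * lamA := by
        have S1 : ∑ i, ∑ j, π i * A i j * (φ j / φ i) = lamA := by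
          have : ∀ i, ∑ j, π i * A i j * (φ j / φ i) = lamA * π i := by
            intro i
            have hne : φ i ≠ 0 := (hφ i).ne'
            have h1 : ∑ j, π i * A i j * (φ j / φ i)
                = (π i / φ i) * ∑ j, A i j * φ j := by
              rw [Finset.mul_sum]
              apply Finset.sum_congr rfl
              intro j _
              field_simp
            rw [h1, hφeq i]
            field_simp
          rw [Finset.sum_congr rfl fun i _ => this i, ← Finset.mul_sum, hπsum, mul_one]
        have S2 : ∑ i, ∑ j, π i * Q i j * (Real.log (φ j) - Real.log (φ i)) = 0 := by
          have e : ∑ i, ∑ j, π i * Q i j * (Real.log (φ j) - Real.log (φ i))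
              = (∑ i, ∑ j, π i * Q i j * Real.log (φ j))
                - ∑ i, ∑ j, π i * Q i j * Real.log (φ i) := by
            rw [← Finset.sum_sub_distrib]
            apply Finset.sum_congr rfl
            intro i _
            rw [← Finset.sum_sub_distrib]
            apply Finset.sum_congr rfl
            intro j _
            ring
          rw [e]
          have t1 : ∑ i, ∑ j, π i * Q i j * Real.log (φ j) = 0 := by
            rw [Finset.sum_comm]
            apply Finset.sum_eq_zero
            intro j _
            have : ∑ i, π i * Q i j * Real.log (φ j)
                = (∑ i, π i * Q i j) * Real.log (φ j) := by
              rw [Finset.sum_mul]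
            rw [this, hcol j, zero_mul]
          have t2 : ∑ i, ∑ j, π i * Q i j * Real.log (φ i) = 0 := by
            apply Finset.sum_eq_zero
            intro i _
            have : ∑ j, π i * Q i j * Real.log (φ i)
                = (π i * Real.log (φ i)) * ∑ j, Q i j := by
              rw [Finset.mul_sum]
              apply Finset.sum_congr rfl
              intro j _
              ring
            rw [this, hrow i, mul_zero]
          rw [t1, t2, sub_zero]
        have e2 : ∑ i, ∑ j, (Real.exp (η - 1) * (π i * A i j * (φ j / φ i))
            - π i * Q i j * (Real.log (φ j) - Real.log (φ i)))
            = Real.exp (η - 1) * (∑ i, ∑ j, π i * A i j * (φ j / φ i))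
              - ∑ i, ∑ j, π i * Q i j * (Real.log (φ j) - Real.log (φ i)) := by
          rw [Finset.mul_sum, ← Finset.sum_sub_distrib]
          apply Finset.sum_congr rfl
          intro i _
          rw [Finset.mul_sum, ← Finset.sum_sub_distrib]
        rw [e2, S1, S2, sub_zero]
end

section
/- For the continuous-time RB walk started from π^RB, the joint probability of occupying a given admissible node sequence i = z_0, …, z_N = j with exactly N jumps in [0, t_f] factorizes as P(N jumps in [0,t_f]) · φ̂_i φ_j / λ_A^N, where P(N jumps in [0,t_f]) = e^{−λ_A t_f}(λ_A t_f)^N/N!. In particular, this probability is the same for all admissible paths with the same endpoints i, j and the same number of jumps N. -/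
open Matrix BigOperators Finset

/-- for the continuous-time RB walk started from π^RB (embedded
chain P^RB, i.i.d. Exp(λ_A) holding times independent of the chain), the joint
probability of a given admissible node sequence i = z_0, …, z_N = j together with
exactly N jumps in [0, t_f] factorizes as
P(N jumps in [0,t_f]) · φ̂_i φ_j / λ_A^N, with
P(N jumps in [0,t_f]) = e^{−λ_A t_f}(λ_A t_f)^N/N!; in particular it only
depends on i, j and N. -/
theorem stmt18 {n : ℕ} (A : Matrix (Fin n) (Fin n) ℝ)
    (hA01 : ∀ i j, A i j = 0 ∨ A i j = 1) (hAdiag : ∀ i, A i i = 0)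
    (hirr : IsIrreducibleMat A)
    (lamA : ℝ) (hlam : 0 < lamA)
    (φ φhat : Fin n → ℝ) (hφ : ∀ i, 0 < φ i) (hφhat : ∀ i, 0 < φhat i)
    (heig : A.mulVec φ = lamA • φ)
    (heigL : A.transpose.mulVec φhat = lamA • φhat)
    (hnorm : ∑ i, φ i * φhat i = 1)
    (tf : ℝ) (htf : 0 < tf)
    (N : ℕ) (i j : Fin n) (z : ℕ → Fin n)
    (hz0 : z 0 = i) (hzN : z N = j)
    (hpath : ∀ k < N, A (z k) (z (k + 1)) = 1) :
    (Real.exp (-(lamA * tf)) * (lamA * tf) ^ N / (N.factorial : ℝ)) *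
      ((φhat i * φ i) *
        ∏ k ∈ Finset.range N,
          A (z k) (z (k + 1)) * φ (z (k + 1)) / (lamA * φ (z k)))
      = (Real.exp (-(lamA * tf)) * (lamA * tf) ^ N / (N.factorial : ℝ)) *
          (φhat i * φ j / lamA ^ N) := by
  have hprod : ∏ k ∈ Finset.range N,
      A (z k) (z (k + 1)) * φ (z (k + 1)) / (lamA * φ (z k))
      = (φ j / φ i) * (1 / lamA) ^ N := by
    have : ∀ k ∈ Finset.range N,
        A (z k) (z (k + 1)) * φ (z (k + 1)) / (lamA * φ (z k))
        = (φ (z (k + 1)) / φ (z k)) * (1 / lamA) := by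
      intro k hk
      rw [hpath k (Finset.mem_range.mp hk)]
      field_simp
    have htel : ∀ M : ℕ, ∏ k ∈ Finset.range M, φ (z (k + 1)) / φ (z k)
        = φ (z M) / φ (z 0) := by
      intro M
      induction M with
      | zero => simp [div_self (hφ (z 0)).ne']
      | succ m ih =>
        rw [Finset.prod_range_succ, ih]
        field_simp [(hφ (z m)).ne', (hφ (z 0)).ne']
    rw [Finset.prod_congr rfl this, Finset.prod_mul_distrib, Finset.prod_const,
      Finset.card_range, htel, hz0, hzN]
  rw [hprod]
  have hφi := (hφ i).ne'
  field_simp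
  ring_nf
  rw [mul_assoc, ← mul_pow, mul_inv_cancel₀ hlam.ne', one_pow, mul_one]
end
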